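/- arXiv:2103.06136 — 4 statements merged into one kernel-verified Lean document; each statement's English description precedes it below -/
import Mathlib

section
/- Let G be a bipartite graph with parts A and B, |A| ≤ n/2, maximum degree less than n/(32⌊ℓ/2⌋), and let B' ⊆ B be such that e(A∖A', B') ≥ nm/16 for some A' ⊆ A. Define A* = { v ∈ A∖A' : deg(v, B') ≥ m/16 }. Then |A*| ≥ ⌊ℓ/2⌋·m. -/
open Finset

/-- If `G` is bipartite with parts `A`, `B`, `|A| ≤ n/2`, maximum degree less than
`n/(32⌊ℓ/2⌋)`, and `e(A∖A', B') ≥ nm/16`, then the set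
`A* = { v ∈ A∖A' : deg(v,B') ≥ m/16 }` has size at least `⌊ℓ/2⌋·m`. -/
theorem many_high_degree_vertices
    {V : Type*} [Fintype V] [DecidableEq V] (G : SimpleGraph V) [DecidableRel G.Adj]
    (ℓ : ℕ) (hℓ : 3 ≤ ℓ) (m n : ℝ) (hm : 0 < m) (hn : 0 < n)
    (A B : Finset V) (hAB : Disjoint A B)
    (hbip : ∀ v w : V, G.Adj v w → ((v ∈ A ∧ w ∈ B) ∨ (v ∈ B ∧ w ∈ A)))
    (hAsize : (A.card : ℝ) ≤ n / 2)
    (hΔ : ∀ v : V, (G.degree v : ℝ) < n / (32 * (ℓ / 2 : ℕ)))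
    (A' : Finset V) (hA'sub : A' ⊆ A)
    (B' : Finset V) (hB'sub : B' ⊆ B)
    (he : n * m / 16 ≤ ∑ x ∈ A \ A', (((G.neighborFinset x) ∩ B').card : ℝ)) :
    ((ℓ / 2 : ℕ) : ℝ) * m ≤
      ({ v ∈ (A \ A' : Finset V) | (m / 16 : ℝ) ≤ ((G.neighborFinset v) ∩ B').card } :
        Set V).ncard := by
  classical
  set k : ℕ := ℓ / 2 with hk
  have hk1 : 1 ≤ k := by omega
  have hkR : (1:ℝ) ≤ (k:ℝ) := by exact_mod_cast hk1
  have h32k : (0:ℝ) < 32 * k := by nlinarith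
  have hbpos : (0:ℝ) < n / (32 * k) := div_pos hn h32k
  set S : Finset V := (A \ A').filter
    (fun v => (m/16 : ℝ) ≤ ((G.neighborFinset v) ∩ B').card) with hS
  have hset : ({ v ∈ (A \ A' : Finset V) |
      (m / 16 : ℝ) ≤ ((G.neighborFinset v) ∩ B').card } : Set V) = ↑S := by
    ext v; simp [hS]
  rw [hset, Set.ncard_coe_finset]
  have hsum : ∑ x ∈ A \ A', (((G.neighborFinset x) ∩ B').card : ℝ)
      ≤ S.card * (n / (32*k)) + A.card * (m/16) := by
    rw [← Finset.sum_filter_add_sum_filter_not (A \ A')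
      (fun v => (m/16:ℝ) ≤ ((G.neighborFinset v) ∩ B').card)]
    have h1 : ∑ x ∈ S, (((G.neighborFinset x) ∩ B').card : ℝ)
        ≤ S.card * (n / (32*k)) := by
      have hb := Finset.sum_le_card_nsmul S
        (fun x => (((G.neighborFinset x) ∩ B').card : ℝ)) (n/(32*k)) ?_
      · rw [nsmul_eq_mul] at hb; exact hb
      intro x _
      calc ((G.neighborFinset x ∩ B').card : ℝ) ≤ (G.degree x : ℝ) := by
            rw [← G.card_neighborFinset_eq_degree]
            exact_mod_cast Finset.card_le_card Finset.inter_subset_left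
        _ ≤ n / (32 * k) := (hΔ x).le
    have h2 : ∑ x ∈ (A \ A').filter
        (fun v => ¬ (m/16:ℝ) ≤ ((G.neighborFinset v) ∩ B').card),
        (((G.neighborFinset x) ∩ B').card : ℝ) ≤ A.card * (m/16) := by
      have h2a : ∑ x ∈ (A \ A').filter
          (fun v => ¬ (m/16:ℝ) ≤ ((G.neighborFinset v) ∩ B').card),
          (((G.neighborFinset x) ∩ B').card : ℝ)
          ≤ ((A \ A').filter
            (fun v => ¬ (m/16:ℝ) ≤ ((G.neighborFinset v) ∩ B').card)).card * (m/16) := by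
        have hb := Finset.sum_le_card_nsmul
          ((A \ A').filter (fun v => ¬ (m/16:ℝ) ≤ ((G.neighborFinset v) ∩ B').card))
          (fun x => (((G.neighborFinset x) ∩ B').card : ℝ)) (m/16)
          (fun x hx => (not_le.mp (Finset.mem_filter.mp hx).2).le)
        rw [nsmul_eq_mul] at hb; exact hb
      refine h2a.trans ?_
      have : (((A \ A').filter
          (fun v => ¬ (m/16:ℝ) ≤ ((G.neighborFinset v) ∩ B').card)).card : ℝ)
          ≤ (A.card : ℝ) := by
        exact_mod_cast Finset.card_le_card
          ((Finset.filter_subset _ _).trans (Finset.sdiff_subset))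
      nlinarith [hm.le]
    linarith
  have hkey : n * m / 32 ≤ S.card * (n / (32*k)) := by
    have : (A.card : ℝ) * (m/16) ≤ (n/2) * (m/16) := by nlinarith [hm.le]
    nlinarith
  have heq : (k:ℝ) * m * (n / (32*k)) = n * m / 32 := by
    field_simp
  rw [← heq] at hkey
  exact le_of_mul_le_mul_right hkey hbpos
end

section
/- Dependent random choice for pairs: Let H be a bipartite graph with parts A* and B', with |A*| = a and |B'| = b. If (1/4)·(a/b)·(m/4 − a·ℓ) ≥ ℓ/2 (where every vertex of A* has at least m/16 neighbours in B'), then there exists a subset U ⊆ A* of size at least ℓ/2 such that every pair of vertices in U has at least ℓ/2 common neighbours in B'. -/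
open Finset

/-- Dependent random choice for pairs: if `H` is bipartite with parts `A*` (size `a`) and
`B'` (size `b`), every vertex of `A*` has at least `m/16` neighbours in `B'`, and
`(1/4)·(a/b)·(m/4 − a·ℓ) ≥ ℓ/2`, then there is `U ⊆ A*` of size at least `ℓ/2` all of
whose pairs of vertices have at least `ℓ/2` common neighbours in `B'`. -/
theorem dependent_random_choice_pairs
    {V : Type*} [Fintype V] [DecidableEq V] (H : SimpleGraph V) [DecidableRel H.Adj]
    (ℓ : ℕ) (hℓ : 3 ≤ ℓ) (m : ℝ) (hm : 0 < m)
    (Astar B' : Finset V) (hd : Disjoint Astar B') (hB' : B'.Nonempty)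
    (hdeg : ∀ v ∈ Astar, (m / 16 : ℝ) ≤ ((H.neighborFinset v) ∩ B').card)
    (hineq : (ℓ : ℝ) / 2 ≤
      (1 / 4) * ((Astar.card : ℝ) / B'.card) * (m / 4 - (Astar.card : ℝ) * ℓ)) :
    ∃ U ⊆ Astar, (ℓ : ℝ) / 2 ≤ U.card ∧
      ∀ u ∈ U, ∀ v ∈ U, u ≠ v →
        (ℓ : ℝ) / 2 ≤ ((H.neighborFinset u) ∩ (H.neighborFinset v) ∩ B').card := by
  classical
  set a := Astar.card with ha
  set b := B'.card with hb
  have hb0 : (0:ℝ) < b := by exact_mod_cast hB'.card_pos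
  -- common neighbourhood of a set S inside B'
  set cn : Finset V → Finset V := fun S => B'.filter (fun x => ∀ u ∈ S, H.Adj u x) with hcn
  -- bad pairs: fewer than ℓ/2 common neighbours
  set bad : Finset V → Prop := fun S => 2 * (cn S).card < ℓ with hbadd
  set P : Finset (Finset V) := (Astar.powersetCard 2).filter bad with hP
  set Av : V → Finset V := fun v => Astar.filter (fun u => H.Adj v u) with hAv
  set X : V → ℕ := fun v => (Av v).card with hX
  set Yf : V → Finset (Finset V) := fun v => P.filter (fun S => ∀ u ∈ S, H.Adj v u) with hYf
  set Y : V → ℕ := fun v => (Yf v).card with hY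
  -- double counting for X
  have hXsumN : ∑ v ∈ B', X v = ∑ u ∈ Astar, ((H.neighborFinset u) ∩ B').card := by
    have h1 : ∀ v, X v = ∑ u ∈ Astar, if H.Adj v u then 1 else 0 := by
      intro v; exact Finset.card_filter _ _
    have h2 : ∀ u, ((H.neighborFinset u) ∩ B').card
        = ∑ v ∈ B', if H.Adj v u then 1 else 0 := by
      intro u
      have he : (H.neighborFinset u) ∩ B' = B'.filter (fun v => H.Adj v u) := by
        ext z
        simp only [Finset.mem_inter, Finset.mem_filter, SimpleGraph.mem_neighborFinset]
        constructor
        · rintro ⟨h1, h2⟩; exact ⟨h2, h1.symm⟩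
        · rintro ⟨h1, h2⟩; exact ⟨h2.symm, h1⟩
      rw [he, Finset.card_filter]
    simp only [h1, h2]
    exact Finset.sum_comm
  -- double counting for Y
  have hYsumN : ∑ v ∈ B', Y v = ∑ S ∈ P, (cn S).card := by
    have h1 : ∀ v, Y v = ∑ S ∈ P, if ∀ u ∈ S, H.Adj v u then 1 else 0 := by
      intro v; exact Finset.card_filter _ _
    have h2 : ∀ S, (cn S).card = ∑ v ∈ B', if ∀ u ∈ S, H.Adj v u then 1 else 0 := by
      intro S
      have he : cn S = B'.filter (fun v => ∀ u ∈ S, H.Adj v u) := by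
        ext z
        simp only [hcn, Finset.mem_filter]
        constructor
        · rintro ⟨h1, h2⟩; exact ⟨h1, fun u hu => (h2 u hu).symm⟩
        · rintro ⟨h1, h2⟩; exact ⟨h1, fun u hu => (h2 u hu).symm⟩
      rw [he, Finset.card_filter]
    simp only [h1, h2]
    exact Finset.sum_comm
  -- bound each bad common neighbourhood
  have hbadbound : ∀ S ∈ P, ((cn S).card : ℝ) ≤ (ℓ:ℝ)/2 := by
    intro S hS
    have hbS : bad S := (Finset.mem_filter.mp hS).2
    have h2 : (2 * (cn S).card : ℝ) ≤ ℓ := by exact_mod_cast (hbS : 2 * (cn S).card < ℓ).le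
    linarith
  have hPcard : (P.card : ℝ) ≤ (a:ℝ)^2 / 2 := by
    have h1 : P.card ≤ (Astar.powersetCard 2).card := Finset.card_filter_le _ _
    have h2 : (Astar.powersetCard 2).card = a.choose 2 := by
      rw [Finset.card_powersetCard]
    have h3 : 2 * a.choose 2 ≤ a * a := by
      rw [Nat.choose_two_right]
      calc 2 * (a * (a-1) / 2) ≤ a * (a-1) := by
            rw [mul_comm]; exact Nat.div_mul_le_self _ _
        _ ≤ a * a := Nat.mul_le_mul_left _ (Nat.sub_le _ _)
    have h4 : (2 * P.card : ℝ) ≤ (a:ℝ) * a := by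
      exact_mod_cast le_trans (Nat.mul_le_mul_left 2 (h1.trans_eq h2)) h3
    nlinarith
  -- total bounds
  have hYtot : ∑ v ∈ B', (Y v : ℝ) ≤ (a:ℝ)^2 * ℓ / 4 := by
    have : ∑ v ∈ B', (Y v : ℝ) = ∑ S ∈ P, ((cn S).card : ℝ) := by
      exact_mod_cast congrArg (Nat.cast : ℕ → ℝ) hYsumN
    rw [this]
    calc ∑ S ∈ P, ((cn S).card : ℝ) ≤ ∑ S ∈ P, (ℓ:ℝ)/2 := Finset.sum_le_sum hbadbound
      _ = P.card * ((ℓ:ℝ)/2) := by rw [Finset.sum_const, nsmul_eq_mul]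
      _ ≤ ((a:ℝ)^2/2) * ((ℓ:ℝ)/2) := by
          have hl0 : (0:ℝ) ≤ (ℓ:ℝ)/2 := by positivity
          exact mul_le_mul_of_nonneg_right hPcard hl0
      _ = (a:ℝ)^2 * ℓ / 4 := by ring
  have hXtot : (a:ℝ) * (m/16) ≤ ∑ v ∈ B', (X v : ℝ) := by
    have : ∑ v ∈ B', (X v : ℝ) = ∑ u ∈ Astar, (((H.neighborFinset u) ∩ B').card : ℝ) := by
      exact_mod_cast congrArg (Nat.cast : ℕ → ℝ) hXsumN
    rw [this]
    calc (a:ℝ) * (m/16) = ∑ _u ∈ Astar, (m/16 : ℝ) := by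
          rw [Finset.sum_const, nsmul_eq_mul]
      _ ≤ _ := Finset.sum_le_sum fun u hu => hdeg u hu
  -- average argument: exists good v
  have hkey : ∑ v ∈ B', ((ℓ:ℝ)/2) ≤ ∑ v ∈ B', ((X v : ℝ) - (Y v : ℝ)) := by
    rw [Finset.sum_sub_distrib, Finset.sum_const, nsmul_eq_mul]
    have hRHS : (b:ℝ) * ((ℓ:ℝ)/2) ≤ (a:ℝ) * (m/16) - (a:ℝ)^2 * ℓ / 4 := by
      have hmul := mul_le_mul_of_nonneg_left hineq hb0.le
      have heq : (b:ℝ) * ((1/4) * ((a:ℝ)/b) * (m/4 - (a:ℝ)*ℓ)) =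
          (a:ℝ) * (m/16) - (a:ℝ)^2 * ℓ / 4 := by
        field_simp
        ring
      linarith [heq ▸ hmul]
    linarith
  obtain ⟨v, hvB, hv⟩ := Finset.exists_le_of_sum_le hB' hkey
  -- construct U from Av v by removing one vertex of each bad pair
  set f : Finset V → V := fun S => if h : S.Nonempty then h.choose else v with hf
  have hfmem : ∀ S : Finset V, S.Nonempty → f S ∈ S := by
    intro S hS
    rw [hf]; simp only [dif_pos hS]; exact hS.choose_spec
  set D : Finset V := (Yf v).image f with hD
  set U : Finset V := Av v \ D with hU
  have hUsub : U ⊆ Astar := fun x hx =>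
    Finset.filter_subset _ _ (Finset.mem_sdiff.mp hx).1
  refine ⟨U, hUsub, ?_, ?_⟩
  · -- size bound
    have hcov : Av v ⊆ U ∪ D := by
      intro x hx
      by_cases hxD : x ∈ D
      · exact Finset.mem_union_right _ hxD
      · exact Finset.mem_union_left _ (Finset.mem_sdiff.mpr ⟨hx, hxD⟩)
    have h1 : X v ≤ U.card + D.card :=
      le_trans (Finset.card_le_card hcov) (Finset.card_union_le _ _)
    have h2 : D.card ≤ Y v := Finset.card_image_le
    have h3 : (X v : ℝ) ≤ (U.card : ℝ) + (Y v : ℝ) := by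
      exact_mod_cast le_trans h1 (Nat.add_le_add_left h2 _)
    linarith
  · -- pair property
    intro u hu w hw huw
    have huAv : u ∈ Av v := (Finset.mem_sdiff.mp hu).1
    have hwAv : w ∈ Av v := (Finset.mem_sdiff.mp hw).1
    set S : Finset V := {u, w} with hS
    have hScard : S.card = 2 := Finset.card_pair huw
    have hSsub : S ⊆ Astar := by
      intro x hx
      rcases Finset.mem_insert.mp hx with rfl | hx
      · exact Finset.filter_subset _ _ huAv
      · rw [Finset.mem_singleton.mp hx]; exact Finset.filter_subset _ _ hwAv
    have hSadj : ∀ x ∈ S, H.Adj v x := by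
      intro x hx
      rcases Finset.mem_insert.mp hx with rfl | hx
      · exact (Finset.mem_filter.mp huAv).2
      · rw [Finset.mem_singleton.mp hx]; exact (Finset.mem_filter.mp hwAv).2
    have hnotbad : ¬ bad S := by
      intro hbadS
      have hSP : S ∈ P := Finset.mem_filter.mpr
        ⟨Finset.mem_powersetCard.mpr ⟨hSsub, hScard⟩, hbadS⟩
      have hSPv : S ∈ Yf v := Finset.mem_filter.mpr ⟨hSP, hSadj⟩
      have hSne : S.Nonempty := ⟨u, Finset.mem_insert_self _ _⟩
      have hfS : f S ∈ S := hfmem S hSne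
      have hfD : f S ∈ D := Finset.mem_image_of_mem f hSPv
      have hfU : f S ∈ U := by
        rcases Finset.mem_insert.mp hfS with h | h
        · rw [h]; exact hu
        · rw [Finset.mem_singleton.mp h]; exact hw
      exact (Finset.mem_sdiff.mp hfU).2 hfD
    have hge : (ℓ:ℝ)/2 ≤ ((cn S).card : ℝ) := by
      have hnl : ℓ ≤ 2 * (cn S).card := Nat.not_lt.mp hnotbad
      have : (ℓ:ℝ) ≤ 2 * (cn S).card := by exact_mod_cast hnl
      linarith
    have hcneq : cn S = (H.neighborFinset u) ∩ (H.neighborFinset w) ∩ B' := by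
      ext x
      simp only [hcn, Finset.mem_filter, Finset.mem_inter, SimpleGraph.mem_neighborFinset, hS,
        Finset.mem_insert, Finset.mem_singleton, forall_eq_or_imp, forall_eq]
      tauto
    rw [← hcneq]
    exact hge
end

section
/- Greedy extraction of disjoint cycles from dense graphs via even-cycle extremal numbers: Let ℓ ≥ 4 be even and suppose every n-vertex graph with more than K n^{1+2/ℓ} edges contains a copy of C_ℓ. Let G be an n-vertex graph with minimum degree at least m and maximum degree Δ(G) < n/(32⌊ℓ/2⌋), where m ≥ M√n with M = 16ℓ, m ≤ n/(16⌈ℓ/2⌉), and n is sufficiently large so that nm/3 ≥ K n^{1+2/ℓ}. Then G contains at least m pairwise vertex-disjoint copies of C_ℓ. -/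
/-!
Greedy extraction. While fewer than `m` disjoint cycles have been found, delete every edge at
their at most `mℓ` vertices: this removes at most `mℓΔ < nm/6` of the at least `nm/2` edges,
so more than `nm/3 ≥ K n^{1+2/ℓ}` edges remain and the extremal hypothesis gives another `C_ℓ`.
Every vertex of a cycle lies on one of its edges, so the new cycle avoids the used vertices.
-/

open SimpleGraph Finset

/-- The bound `#S + card ι ≤ m * card ι` says that `S` is no larger than the vertex set of
`m - 1` copies. -/
lemma exists_pairwise_disjoint_of_exists_avoiding {ι V : Type*} [Fintype ι] [DecidableEq V]
    (P : (ι → V) → Prop) (m : ℕ)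
    (h : ∀ S : Finset V, #S + Fintype.card ι ≤ m * Fintype.card ι → ∃ g, P g ∧ ∀ a, g a ∉ S) :
    ∃ f : Fin m → ι → V, (∀ i, P (f i)) ∧ ∀ i j, i ≠ j → ∀ a b, f i a ≠ f j b := by
  induction m with
  | zero => exact ⟨finZeroElim, finZeroElim, finZeroElim⟩
  | succ m ih =>
    obtain ⟨f, hfP, hf⟩ := ih fun S hS => h S (by rw [Nat.succ_mul]; omega)
    let S : Finset V := univ.image fun p : Fin m × ι => f p.1 p.2
    have hS : #S + Fintype.card ι ≤ (m + 1) * Fintype.card ι := by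
      rw [Nat.succ_mul, add_le_add_iff_right]
      exact card_image_le.trans (by simp)
    obtain ⟨g, hgP, hgS⟩ := h S hS
    have hfS : ∀ i b, f i b ∈ S := fun i b => mem_image_of_mem _ (mem_univ (i, b))
    refine ⟨Fin.snoc f g, Fin.lastCases (by simpa) (by simpa), ?_⟩
    intro i j hij a b
    induction i using Fin.lastCases <;> induction j using Fin.lastCases <;>
      simp only [Fin.snoc_last, Fin.snoc_castSucc, ne_eq] at hij ⊢
    · exact (hij trivial).elim
    · exact fun h => hgS a (h ▸ hfS _ b)
    · exact fun h => hgS b (h ▸ hfS _ a)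
    · exact hf _ _ (ne_of_apply_ne _ hij) a b

lemma cast_mul_div_lt_div_six {ℓ : ℕ} (hℓ : 2 ≤ ℓ) {x : ℝ} (hx : 0 < x) :
    ℓ * (x / (32 * (ℓ / 2 : ℕ))) < x / 6 := by
  have hq : (0 : ℝ) < (ℓ / 2 : ℕ) := by norm_cast; omega
  have h : (6 * ℓ : ℝ) < 32 * (ℓ / 2 : ℕ) := by norm_cast; omega
  rw [mul_div_assoc', div_lt_div_iff₀ (by positivity) (by norm_num)]
  nlinarith

namespace SimpleGraph

variable {V : Type*} (G : SimpleGraph V)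

/-- Deleting edges rather than vertices keeps the vertex type, so that the extremal hypothesis,
stated for graphs on `Fin k`, applies to the result. -/
def deleteIncidenceSets (S : Set V) : SimpleGraph V :=
  G.deleteEdges (⋃ x ∈ S, G.incidenceSet x)

variable {G}

lemma deleteIncidenceSets_adj {S : Set V} {v w : V} :
    (G.deleteIncidenceSets S).Adj v w ↔ G.Adj v w ∧ v ∉ S ∧ w ∉ S := by
  simp only [deleteIncidenceSets, deleteEdges_adj, Set.mem_iUnion₂, mk'_mem_incidenceSet_iff]
  grind

lemma forall_adj_and_notMem_of_deleteIncidenceSets {W : Type*} {F : SimpleGraph W}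
    (hF : ∀ a, ∃ b, F.Adj a b) {S : Set V} {g : W → V}
    (hg : ∀ a b, F.Adj a b → (G.deleteIncidenceSets S).Adj (g a) (g b)) :
    (∀ a b, F.Adj a b → G.Adj (g a) (g b)) ∧ ∀ a, g a ∉ S :=
  ⟨fun a b hab => (deleteIncidenceSets_adj.1 (hg a b hab)).1, fun a =>
    let ⟨b, hab⟩ := hF a
    (deleteIncidenceSets_adj.1 (hg a b hab)).2.1⟩

lemma exists_adj_cycleGraph {ℓ : ℕ} (hℓ : 2 ≤ ℓ) (a : Fin ℓ) : ∃ b, (cycleGraph ℓ).Adj a b := by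
  obtain ⟨k, rfl⟩ := Nat.exists_eq_add_of_le' hℓ
  exact ⟨a + 1, cycleGraph_adj.mpr (Or.inr (add_sub_cancel_left a 1))⟩

section Finite

variable [Fintype V] [DecidableRel G.Adj]

lemma ncard_setOf_adj_eq_degree (v : V) : {w | G.Adj v w}.ncard = G.degree v := by
  rw [← card_neighborFinset_eq_degree, ← Set.ncard_coe_finset, coe_neighborFinset]
  rfl

lemma card_mul_le_two_mul_card_edgeFinset {m : ℕ} (h : ∀ v, m ≤ G.degree v) :
    Fintype.card V * m ≤ 2 * #G.edgeFinset := by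
  rw [← sum_degrees_eq_twice_card_edges, ← smul_eq_mul, ← card_univ, ← sum_const]
  exact sum_le_sum fun v _ => h v

variable [DecidableEq V] (S : Finset V) [DecidableRel (G.deleteIncidenceSets S).Adj]

lemma card_edgeFinset_le_card_edgeFinset_deleteIncidenceSets_add :
    #G.edgeFinset ≤ #(G.deleteIncidenceSets S).edgeFinset + ∑ v ∈ S, G.degree v := by
  calc #G.edgeFinset
      ≤ #((G.deleteIncidenceSets S).edgeFinset ∪ S.biUnion fun v => G.incidenceFinset v) := by
        refine card_le_card fun e he => ?_
        induction e using Sym2.ind with | _ v w => ?_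
        rw [mem_edgeFinset, mem_edgeSet] at he
        rw [mem_union, mem_edgeFinset, mem_edgeSet, deleteIncidenceSets_adj, mem_biUnion]
        by_cases hv : v ∈ S
        · exact .inr ⟨v, hv, (mem_incidenceFinset ..).2 ⟨he, Sym2.mem_mk_left v w⟩⟩
        by_cases hw : w ∈ S
        · exact .inr ⟨w, hw, (mem_incidenceFinset ..).2 ⟨he, Sym2.mem_mk_right v w⟩⟩
        exact .inl ⟨he, hv, hw⟩
    _ ≤ #(G.deleteIncidenceSets S).edgeFinset + ∑ v ∈ S, #(G.incidenceFinset v) :=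
        (card_union_le _ _).trans (Nat.add_le_add_left card_biUnion_le _)
    _ = _ := by simp only [card_incidenceFinset_eq_degree]

lemma sub_le_card_edgeFinset_deleteIncidenceSets {m : ℕ} {Δ : ℝ} (hδ : ∀ v, m ≤ G.degree v)
    (hΔ : ∀ v, G.degree v ≤ Δ) :
    Fintype.card V * m / 2 - #S * Δ ≤ #(G.deleteIncidenceSets S).edgeFinset := by
  have hG : (Fintype.card V * m : ℝ) ≤ 2 * #G.edgeFinset := by
    exact_mod_cast G.card_mul_le_two_mul_card_edgeFinset hδ
  have hS : (∑ v ∈ S, G.degree v : ℝ) ≤ #S * Δ := by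
    simpa using sum_le_card_nsmul S (fun v => (G.degree v : ℝ)) Δ fun v _ => hΔ v
  have hdel : (#G.edgeFinset : ℝ) ≤
      #(G.deleteIncidenceSets S).edgeFinset + ∑ v ∈ S, (G.degree v : ℝ) := by
    exact_mod_cast G.card_edgeFinset_le_card_edgeFinset_deleteIncidenceSets_add S
  linarith

end Finite

end SimpleGraph

theorem greedy_disjoint_even_cycles_general
    (ℓ : ℕ) (hℓ : 4 ≤ ℓ) (K : ℝ)
    (hex : ∀ (k : ℕ) (H : SimpleGraph (Fin k)),
      K * (k : ℝ) ^ ((1 : ℝ) + 2 / ℓ) < (H.edgeSet.ncard : ℝ) →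
      ∃ f : Fin ℓ → Fin k, Function.Injective f ∧
        ∀ a b : Fin ℓ, (cycleGraph ℓ).Adj a b → H.Adj (f a) (f b))
    (n m : ℕ) (G : SimpleGraph (Fin n))
    (hδ : ∀ v : Fin n, m ≤ {w | G.Adj v w}.ncard)
    (hΔ : ∀ v : Fin n, ({w | G.Adj v w}.ncard : ℝ) < (n : ℝ) / (32 * (ℓ / 2 : ℕ)))
    (hm₂ : (m : ℝ) ≤ (n : ℝ) / (16 * ((ℓ + 1) / 2 : ℕ)))
    (hlarge : K * (n : ℝ) ^ ((1 : ℝ) + 2 / ℓ) ≤ (n : ℝ) * m / 3) :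
    ∃ f : Fin m → Fin ℓ → Fin n,
      (∀ i, Function.Injective (f i) ∧
        ∀ a b : Fin ℓ, (cycleGraph ℓ).Adj a b → G.Adj (f i a) (f i b)) ∧
      ∀ i j : Fin m, i ≠ j → ∀ a b : Fin ℓ, f i a ≠ f j b := by
  classical
  simp only [G.ncard_setOf_adj_eq_degree] at hδ hΔ
  refine exists_pairwise_disjoint_of_exists_avoiding
    (fun g => Function.Injective g ∧ ∀ a b, (cycleGraph ℓ).Adj a b → G.Adj (g a) (g b)) m
    fun S hS => ?_
  rw [Fintype.card_fin] at hS
  have hm : 0 < m := by nlinarith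
  have hn : 0 < n := by
    by_contra! hn
    simp [Nat.le_zero.1 hn] at hm₂
    omega
  set Δ : ℝ := n / (32 * (ℓ / 2 : ℕ))
  have hdeleted : (#S : ℝ) * Δ < n * m / 6 := calc
    (#S : ℝ) * Δ ≤ m * (ℓ * Δ) := by
      rw [← mul_assoc]; gcongr; exact_mod_cast (Nat.le_add_right _ _).trans hS
    _ < m * (n / 6) := by gcongr; exact cast_mul_div_lt_div_six (by omega) (by positivity)
    _ = n * m / 6 := by ring
  have hcycle : K * (n : ℝ) ^ ((1 : ℝ) + 2 / ℓ) < (G.deleteIncidenceSets S).edgeSet.ncard := by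
    have hH := G.sub_le_card_edgeFinset_deleteIncidenceSets S hδ (fun v => (hΔ v).le)
    rw [Fintype.card_fin] at hH
    rw [← coe_edgeFinset, Set.ncard_coe_finset]
    linarith
  obtain ⟨g, hg_inj, hg⟩ := hex n _ hcycle
  obtain ⟨hgG, hgS⟩ :=
    forall_adj_and_notMem_of_deleteIncidenceSets (exists_adj_cycleGraph (by omega)) hg
  exact ⟨g, ⟨hg_inj, hgG⟩, hgS⟩

/-- Greedy extraction of disjoint cycles from dense graphs via even-cycle extremal numbers.
If every graph with more than `K·(#vertices)^{1+2/ℓ}` edges contains a copy of `C_ℓ`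
(Bondy–Simonovits), and `G` is an `n`-vertex graph with `δ(G) ≥ m ≥ 16ℓ√n`,
`m ≤ n/(16⌈ℓ/2⌉)`, `Δ(G) < n/(32⌊ℓ/2⌋)`, and `n` large enough that `nm/3 ≥ K n^{1+2/ℓ}`,
then `G` contains `m` pairwise vertex-disjoint copies of `C_ℓ`. -/
theorem greedy_disjoint_even_cycles
    (ℓ : ℕ) (hℓ : 4 ≤ ℓ) (hev : Even ℓ) (K : ℝ) (hK : 0 < K)
    (hex : ∀ (k : ℕ) (H : SimpleGraph (Fin k)),
      K * (k : ℝ) ^ ((1 : ℝ) + 2 / ℓ) < (H.edgeSet.ncard : ℝ) →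
      ∃ f : Fin ℓ → Fin k, Function.Injective f ∧
        ∀ a b : Fin ℓ, (cycleGraph ℓ).Adj a b → H.Adj (f a) (f b))
    (n m : ℕ) (G : SimpleGraph (Fin n))
    (hδ : ∀ v : Fin n, m ≤ {w | G.Adj v w}.ncard)
    (hΔ : ∀ v : Fin n, ({w | G.Adj v w}.ncard : ℝ) < (n : ℝ) / (32 * (ℓ / 2 : ℕ)))
    (hm₁ : 16 * (ℓ : ℝ) * Real.sqrt n ≤ m)
    (hm₂ : (m : ℝ) ≤ (n : ℝ) / (16 * ((ℓ + 1) / 2 : ℕ)))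
    (hlarge : K * (n : ℝ) ^ ((1 : ℝ) + 2 / ℓ) ≤ (n : ℝ) * m / 3) :
    ∃ f : Fin m → Fin ℓ → Fin n,
      (∀ i, Function.Injective (f i) ∧
        ∀ a b : Fin ℓ, (cycleGraph ℓ).Adj a b → G.Adj (f i a) (f i b)) ∧
      ∀ i j : Fin m, i ≠ j → ∀ a b : Fin ℓ, f i a ≠ f j b :=
  greedy_disjoint_even_cycles_general ℓ hℓ K hex n m G hδ hΔ hm₂ hlarge
end

section
/- Tripartite extremal construction for odd ℓ: Let ℓ ≥ 3 be odd and 1/2 ≤ α < (ℓ+1)/(2ℓ). The complete tripartite graph on n vertices with class sizes (α − (ℓ−1)/(2ℓ))n, (1/2 − α/2 + (ℓ−1)/(4ℓ))n, (1/2 − α/2 + (ℓ−1)/(4ℓ))n has minimum degree αn, and any family of pairwise vertex-disjoint copies of C_ℓ in it has size at most (α − (ℓ−1)/(2ℓ))n, which is less than n/ℓ. -/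
open SimpleGraph

/-- The class index of a vertex of the tripartite vertex set. -/
def triPart (a b c : ℕ) : Fin a ⊕ Fin b ⊕ Fin c → Fin 3 :=
  Sum.elim (fun _ => 0) (Sum.elim (fun _ => 1) (fun _ => 2))

/-- The complete tripartite graph with class sizes `a`, `b`, `c`. -/
def completeTripartiteGraph (a b c : ℕ) : SimpleGraph (Fin a ⊕ Fin b ⊕ Fin c) where
  Adj x y := triPart a b c x ≠ triPart a b c y
  symm := ⟨fun _ _ h => h.symm⟩
  loopless := ⟨fun _ h => h rfl⟩

/-!
A vertex is adjacent exactly to the vertices outside its class, so the degree bound and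
`a < n / ℓ` are arithmetic in `α` and `t = (ℓ - 1) / (2ℓ)`, using `1 / ℓ = 1 - 2t`, `α < 1 - t`
and `t ≥ 1 / 3`. The class index is a proper 3-colouring, and an odd cycle has chromatic number 3,
so every copy of `C_ℓ` meets all three classes, in particular the class of size `a`; disjoint copies
meet it in distinct vertices.
-/

namespace SimpleGraph

theorem cycleGraph.coloring_surjective_of_odd {ℓ : ℕ} (hℓ : 2 ≤ ℓ) (hodd : Odd ℓ)
    (C : (cycleGraph ℓ).Coloring (Fin 3)) : Function.Surjective C :=
  le_chromaticNumber_iff_forall_surjective.mp (chromaticNumber_cycleGraph_of_odd ℓ hℓ hodd).ge C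

end SimpleGraph

namespace completeTripartiteGraph

def coloring (a b c : ℕ) : (completeTripartiteGraph a b c).Coloring (Fin 3) :=
  Coloring.mk (triPart a b c) id

theorem exists_inl_of_hom_cycleGraph {ℓ a b c : ℕ} (hℓ : 2 ≤ ℓ) (hodd : Odd ℓ)
    (φ : cycleGraph ℓ →g completeTripartiteGraph a b c) : ∃ x y, φ x = Sum.inl y := by
  obtain ⟨x, hx⟩ := cycleGraph.coloring_surjective_of_odd hℓ hodd ((coloring a b c).comp φ) 0
  change triPart a b c (φ x) = 0 at hx
  refine ⟨x, ?_⟩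
  rcases h : φ x with y | y | y <;> simp [h, triPart] at hx ⊢

theorem ncard_adj_inl (a b c : ℕ) (x : Fin a) :
    {w | (completeTripartiteGraph a b c).Adj (Sum.inl x) w}.ncard = b + c := by
  have : {w | (completeTripartiteGraph a b c).Adj (Sum.inl x) w} = Set.range Sum.inr := by
    ext (y | y | y) <;> simp [completeTripartiteGraph, triPart]
  rw [this, Set.ncard_range_of_injective Sum.inr_injective]
  simp

theorem ncard_adj_inr_inl (a b c : ℕ) (x : Fin b) :
    {w | (completeTripartiteGraph a b c).Adj (Sum.inr (Sum.inl x)) w}.ncard = a + c := by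
  have : {w | (completeTripartiteGraph a b c).Adj (Sum.inr (Sum.inl x)) w} =
      Set.range (Sum.map id Sum.inr) := by
    ext (y | y | y) <;> simp [completeTripartiteGraph, triPart]
  rw [this, Set.ncard_range_of_injective
    (Sum.map_injective.mpr ⟨Function.injective_id, Sum.inr_injective⟩)]
  simp

theorem ncard_adj_inr_inr (a b c : ℕ) (x : Fin c) :
    {w | (completeTripartiteGraph a b c).Adj (Sum.inr (Sum.inr x)) w}.ncard = a + b := by
  have : {w | (completeTripartiteGraph a b c).Adj (Sum.inr (Sum.inr x)) w} =
      Set.range (Sum.map id Sum.inl) := by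
    ext (y | y | y) <;> simp [completeTripartiteGraph, triPart]
  rw [this, Set.ncard_range_of_injective
    (Sum.map_injective.mpr ⟨Function.injective_id, Sum.inl_injective⟩)]
  simp

end completeTripartiteGraph

theorem card_le_of_disjoint_of_forall_exists_inl {ι κ α β : Type*} [Fintype ι] [Fintype α]
    (f : ι → κ → α ⊕ β) (hdisj : ∀ i j, i ≠ j → ∀ x y, f i x ≠ f j y)
    (hleft : ∀ i, ∃ x y, f i x = Sum.inl y) : Fintype.card ι ≤ Fintype.card α := by
  choose x g hg using hleft
  refine Fintype.card_le_of_injective g fun i j hij => ?_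
  by_contra hne
  exact hdisj i j hne (x i) (x j) (by rw [hg, hg, hij])

theorem class_size_bounds {ℓ α a b n : ℝ} (hℓ : 3 ≤ ℓ) (hα : α < (ℓ + 1) / (2 * ℓ))
    (hn : 0 < n) (hav : a = (α - (ℓ - 1) / (2 * ℓ)) * n)
    (hbv : b = (1 / 2 - α / 2 + (ℓ - 1) / (4 * ℓ)) * n) :
    α * n ≤ b + b ∧ α * n ≤ a + b ∧ a < n / ℓ := by
  set t := (ℓ - 1) / (2 * ℓ) with ht
  have hℓinv : 1 / ℓ = 1 - 2 * t := by rw [ht]; field_simp; ring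
  have ht3 : 1 / 3 ≤ t := by
    rw [ht, le_div_iff₀ (by positivity)]
    linarith
  have hαt : α < 1 - t := by
    have : (ℓ + 1) / (2 * ℓ) = 1 - t := by rw [ht]; field_simp; ring
    linarith
  have hquarter : (ℓ - 1) / (4 * ℓ) = t / 2 := by rw [ht]; field_simp; ring
  rw [hbv, hquarter, hav, div_eq_mul_one_div n, hℓinv]
  refine ⟨?_, ?_, ?_⟩
  · nlinarith [mul_le_mul_of_nonneg_right (by linarith : α ≤ 1 - α + t) hn.le]
  · nlinarith [mul_le_mul_of_nonneg_right hαt.le hn.le]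
  · nlinarith [mul_lt_mul_of_pos_right (by linarith : α - t < 1 - 2 * t) hn]

theorem tripartite_extremal_construction_general
    (ℓ : ℕ) (hℓ : 3 ≤ ℓ) (hodd : Odd ℓ) (α : ℝ)
    (hα₂ : α < ((ℓ : ℝ) + 1) / (2 * ℓ))
    (a b n : ℕ) (ha : 0 < a)
    (hav : (a : ℝ) = (α - ((ℓ : ℝ) - 1) / (2 * ℓ)) * n)
    (hbv : (b : ℝ) = (1 / 2 - α / 2 + ((ℓ : ℝ) - 1) / (4 * ℓ)) * n) :
    (∀ v : Fin a ⊕ Fin b ⊕ Fin b,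
      α * n ≤ ({w | (completeTripartiteGraph a b b).Adj v w}.ncard : ℝ)) ∧
    (∀ (k : ℕ) (f : Fin k → Fin ℓ → (Fin a ⊕ Fin b ⊕ Fin b)),
      (∀ i, Function.Injective (f i) ∧
        ∀ x y : Fin ℓ, (cycleGraph ℓ).Adj x y →
          (completeTripartiteGraph a b b).Adj (f i x) (f i y)) →
      (∀ i j, i ≠ j → ∀ x y : Fin ℓ, f i x ≠ f j y) →
      k ≤ a) ∧
    (a : ℝ) < (n : ℝ) / ℓ := by
  have hn : 0 < n := Nat.pos_of_ne_zero (by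
    rintro rfl
    simp only [CharP.cast_eq_zero, mul_zero, Nat.cast_eq_zero] at hav
    omega)
  obtain ⟨h2b, hab, hsmall⟩ := class_size_bounds (by exact_mod_cast hℓ) hα₂
    (by exact_mod_cast hn) hav hbv
  refine ⟨?_, fun k f hcyc hdisj => ?_, hsmall⟩
  · rintro (x | x | x)
    · rw [completeTripartiteGraph.ncard_adj_inl]; exact_mod_cast h2b
    · rw [completeTripartiteGraph.ncard_adj_inr_inl]; exact_mod_cast hab
    · rw [completeTripartiteGraph.ncard_adj_inr_inr]; exact_mod_cast hab
  · simpa using card_le_of_disjoint_of_forall_exists_inl f hdisj fun i =>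
      completeTripartiteGraph.exists_inl_of_hom_cycleGraph (by omega) hodd ⟨f i, (hcyc i).2 _ _⟩

/-- Tripartite extremal construction for odd `ℓ`: for odd `ℓ ≥ 3` and
`1/2 ≤ α < (ℓ+1)/(2ℓ)`, the complete tripartite graph on `n` vertices with class sizes
`(α − (ℓ−1)/(2ℓ))n` and twice `(1/2 − α/2 + (ℓ−1)/(4ℓ))n` has minimum degree `αn`, and
any family of pairwise vertex-disjoint copies of `C_ℓ` in it has size at most
`(α − (ℓ−1)/(2ℓ))n < n/ℓ`. -/
theorem tripartite_extremal_construction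
    (ℓ : ℕ) (hℓ : 3 ≤ ℓ) (hodd : Odd ℓ) (α : ℝ)
    (hα₁ : 1 / 2 ≤ α) (hα₂ : α < ((ℓ : ℝ) + 1) / (2 * ℓ))
    (a b n : ℕ) (ha : 0 < a) (hb : 0 < b) (habn : a + 2 * b = n)
    (hav : (a : ℝ) = (α - ((ℓ : ℝ) - 1) / (2 * ℓ)) * n)
    (hbv : (b : ℝ) = (1 / 2 - α / 2 + ((ℓ : ℝ) - 1) / (4 * ℓ)) * n) :
    (∀ v : Fin a ⊕ Fin b ⊕ Fin b,
      α * n ≤ ({w | (completeTripartiteGraph a b b).Adj v w}.ncard : ℝ)) ∧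
    (∀ (k : ℕ) (f : Fin k → Fin ℓ → (Fin a ⊕ Fin b ⊕ Fin b)),
      (∀ i, Function.Injective (f i) ∧
        ∀ x y : Fin ℓ, (cycleGraph ℓ).Adj x y →
          (completeTripartiteGraph a b b).Adj (f i x) (f i y)) →
      (∀ i j, i ≠ j → ∀ x y : Fin ℓ, f i x ≠ f j y) →
      k ≤ a) ∧
    (a : ℝ) < (n : ℝ) / ℓ :=
  tripartite_extremal_construction_general ℓ hℓ hodd α hα₂ a b n ha hav hbv
end
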